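/- arXiv:1705.07018 — 2 statements merged into one kernel-verified Lean document; each statement's English description precedes it below -/
import Mathlib

section
/- Let φ = (1+√5)/2, let k be a positive integer, and let s be a real number with 1 ≤ s < φ + 1 − 1/φ^{k−1}. Then (φ^k − 1)/s > (1 − 1/s)·φ^{k−1}. -/
/-! Multiplying the hypothesis by `φ ^ (k - 1)` gives `(s - 1) φ^(k-1) < φ^k - 1`, which is the claim
multiplied by `s`. Nothing about `φ` beyond positivity is needed. -/

lemma one_sub_one_div_mul_lt_div {a s x : ℝ} (ha : 0 < a) (hs : 0 < s)
    (h : s < x + 1 - 1 / a) : (1 - 1 / s) * a < (x * a - 1) / s := by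
  have hmul : (s - 1) * a < x * a - 1 := by
    calc (s - 1) * a < (x - 1 / a) * a := mul_lt_mul_of_pos_right (by linarith) ha
      _ = x * a - 1 := by field_simp
  rw [lt_div_iff₀ hs]
  calc (1 - 1 / s) * a * s = (s - 1) * a := by field_simp
    _ < x * a - 1 := hmul

theorem stmt_10 (k : ℕ) (hk : 1 ≤ k) (s : ℝ) (hs1 : 1 ≤ s)
    (hs2 : s < (1 + Real.sqrt 5) / 2 + 1 - 1 / ((1 + Real.sqrt 5) / 2) ^ (k - 1)) :
    (((1 + Real.sqrt 5) / 2) ^ k - 1) / s > (1 - 1 / s) * ((1 + Real.sqrt 5) / 2) ^ (k - 1) := by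
  set φ : ℝ := (1 + Real.sqrt 5) / 2
  have hφ : 0 < φ := by positivity
  obtain ⟨n, rfl⟩ : ∃ n, k = n + 1 := ⟨k - 1, by omega⟩
  rw [Nat.add_sub_cancel] at hs2 ⊢
  rw [pow_succ', gt_iff_lt]
  exact one_sub_one_div_mul_lt_div (pow_pos hφ n) (by linarith) hs2
end

section
/- Let s, a, ℓ, ε be positive reals with 1 ≤ s < φ + 1 (φ the golden ratio) and ℓ > φ·a + 3sε. Then a/s + ℓ/s − ε > a + 2ε. -/
theorem add_two_mul_lt_div_add_div_sub {s a ℓ ε c : ℝ} (hs : 0 < s) (ha : 0 < a)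
    (hsc : s < 1 + c) (h : c * a + 3 * s * ε < ℓ) :
    a + 2 * ε < a / s + ℓ / s - ε := by
  have hsa : s * a < (1 + c) * a := mul_lt_mul_of_pos_right hsc ha
  have key : s * (a + 2 * ε + ε) < a + ℓ := by linarith
  rw [← add_div, lt_sub_iff_add_lt, lt_div_iff₀ hs]
  linarith

theorem stmt_12_general (s a ℓ ε : ℝ) (ha : 0 < a)
    (hs1 : 1 ≤ s) (hs2 : s < (1 + Real.sqrt 5) / 2 + 1)
    (h : ℓ > ((1 + Real.sqrt 5) / 2) * a + 3 * s * ε) :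
    a / s + ℓ / s - ε > a + 2 * ε :=
  add_two_mul_lt_div_add_div_sub (by linarith) ha (by linarith) h

theorem stmt_12 (s a ℓ ε : ℝ) (ha : 0 < a) (hℓ : 0 < ℓ) (hε : 0 < ε)
    (hs1 : 1 ≤ s) (hs2 : s < (1 + Real.sqrt 5) / 2 + 1)
    (h : ℓ > ((1 + Real.sqrt 5) / 2) * a + 3 * s * ε) :
    a / s + ℓ / s - ε > a + 2 * ε :=
  stmt_12_general s a ℓ ε ha hs1 hs2 h
end
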